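/- Let ι: A → H be a right coideal subalgebra of a Hopf algebra H over a field k, with right reflection r(A) = H/HA⁺ and projection π: H → r(A). The linear bijection H⊗H → H⊗H given by h⊗k ↦ h₁⊗h₂k descends to a well-defined linear bijection H⊗_A H ≅ r(A)⊗H, sending h⊗_A k to π(h₁)⊗h₂k. -/

import Mathlib

/-!
STATEMENT 6: Let ι: A → H be a right coideal subalgebra of a Hopf algebra H over a field
k, with right reflection r(A) = H/HA⁺ and projection π: H → r(A). The linear bijection
H⊗H → H⊗H given by h⊗k ↦ h₁⊗h₂k descends to a well-defined linear bijection
H⊗_A H ≅ r(A)⊗H, sending h⊗_A k to π(h₁)⊗h₂k.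
-/

noncomputable section
open TensorProduct Coalgebra

variable (k : Type) [Field k] (H : Type) [Ring H] [HopfAlgebra k H]
variable (A : Type) [Ring A] [Algebra k A] (ι : A →ₐ[k] H)

/-- `ι : A → H` is a right coideal subalgebra: `ι` is injective and `Δ(A) ⊆ A ⊗ H`. -/
def IsRightCoidealSubalgebra : Prop :=
  Function.Injective ι ∧
    ∀ a : A, comul (R := k) (ι a) ∈
      LinearMap.range (TensorProduct.map (ι : A →ₗ[k] H) (LinearMap.id : H →ₗ[k] H))

/-- The subspace `HA⁺ ⊆ H`, where `A⁺ = ker (ε ∘ ι)`. -/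
def HAplus : Submodule k H :=
  Submodule.span k
    {z | ∃ (h : H) (a : A), counit (R := k) (ι a) = 0 ∧ z = h * ι a}

/-- The right reflection `r(A) = H/HA⁺` of the right coideal subalgebra `A`. -/
def RightReflection : Type := H ⧸ HAplus k H A ι

instance : AddCommGroup (RightReflection k H A ι) :=
  inferInstanceAs (AddCommGroup (H ⧸ HAplus k H A ι))

instance : Module k (RightReflection k H A ι) :=
  inferInstanceAs (Module k (H ⧸ HAplus k H A ι))

/-- The projection `π : H → r(A)`. -/
def rproj : H →ₗ[k] RightReflection k H A ι := (HAplus k H A ι).mkQ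

/-- The subspace of `H ⊗[k] H` spanned by the elements `h·ι(a) ⊗ h' - h ⊗ ι(a)·h'`;
quotienting by it yields `H ⊗[A] H`. -/
def tensorARel : Submodule k (H ⊗[k] H) :=
  Submodule.span k
    {z | ∃ (h h' : H) (a : A), z = (h * ι a) ⊗ₜ[k] h' - h ⊗ₜ[k] (ι a * h')}

/-- The tensor product `H ⊗[A] H`. -/
def TensorOverA : Type := (H ⊗[k] H) ⧸ tensorARel k H A ι

/-- The linear map `H ⊗ H → r(A) ⊗ H`, `h ⊗ h' ↦ π(h₁) ⊗ h₂h'`. -/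
def galoisBeta : (H ⊗[k] H) →ₗ[k] (RightReflection k H A ι ⊗[k] H) :=
  TensorProduct.map (rproj k H A ι) LinearMap.id ∘ₗ
    LinearMap.lTensor H (LinearMap.mul' k H) ∘ₗ
    (TensorProduct.assoc k H H H).toLinearMap ∘ₗ
    LinearMap.rTensor H (comul (R := k))


local notation "S'" => HopfAlgebra.antipode (R := k) (A := H)

lemma sum4_comm {M : Type*} [AddCommMonoid M] {α β : Type*} {γ : α → Type*} {δ : β → Type*}
    (sa : Finset α) (sc : ∀ a, Finset (γ a)) (sb : Finset β) (sd : ∀ b, Finset (δ b))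
    (F : (a : α) → γ a → (b : β) → (δ b) → M) :
    (∑ a ∈ sa, ∑ c ∈ sc a, ∑ b ∈ sb, ∑ d ∈ sd b, F a c b d) =
    ∑ b ∈ sb, ∑ d ∈ sd b, ∑ a ∈ sa, ∑ c ∈ sc a, F a c b d :=
  calc (∑ a ∈ sa, ∑ c ∈ sc a, ∑ b ∈ sb, ∑ d ∈ sd b, F a c b d)
      = ∑ a ∈ sa, ∑ b ∈ sb, ∑ c ∈ sc a, ∑ d ∈ sd b, F a c b d :=
        Finset.sum_congr rfl fun _ _ => Finset.sum_comm
    _ = ∑ b ∈ sb, ∑ a ∈ sa, ∑ c ∈ sc a, ∑ d ∈ sd b, F a c b d := Finset.sum_comm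
    _ = ∑ b ∈ sb, ∑ a ∈ sa, ∑ d ∈ sd b, ∑ c ∈ sc a, F a c b d :=
        Finset.sum_congr rfl fun _ _ => Finset.sum_congr rfl fun _ _ => Finset.sum_comm
    _ = ∑ b ∈ sb, ∑ d ∈ sd b, ∑ a ∈ sa, ∑ c ∈ sc a, F a c b d :=
        Finset.sum_congr rfl fun _ _ => Finset.sum_comm

def mulRepr {a b : H} {ia ib : Type*} (ra : Coalgebra.Repr k a ia) (rb : Coalgebra.Repr k b ib) :
    Coalgebra.Repr k (a * b) (ia × ib) where
  index := ra.index ×ˢ rb.index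
  left := fun p => ra.left p.1 * rb.left p.2
  right := fun p => ra.right p.1 * rb.right p.2
  eq := by
    rw [Finset.sum_product, Bialgebra.comul_mul, ← ra.eq, ← rb.eq, Finset.sum_mul_sum]
    simp [Algebra.TensorProduct.tmul_mul_tmul]

lemma sum_counit_smul_right {x : H} {ι' : Type*} (r : Coalgebra.Repr k x ι') :
    ∑ i ∈ r.index, counit (R := k) (r.left i) • r.right i = x := by
  have h := congrArg (TensorProduct.lid k H) (Coalgebra.sum_counit_tmul_eq r)
  rw [map_sum] at h
  simp only [lid_tmul, one_smul] at h
  exact h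

lemma sum_counit_smul_left {x : H} {ι' : Type*} (r : Coalgebra.Repr k x ι') :
    ∑ i ∈ r.index, counit (R := k) (r.right i) • r.left i = x := by
  have h := congrArg (TensorProduct.rid k H) (Coalgebra.sum_tmul_counit_eq r)
  rw [map_sum] at h
  simp only [rid_tmul, one_smul] at h
  exact h

def T3 (f g h : H →ₗ[k] H) : H ⊗[k] (H ⊗[k] H) →ₗ[k] H :=
  LinearMap.mul' k H ∘ₗ TensorProduct.map f (LinearMap.mul' k H ∘ₗ TensorProduct.map g h)

@[simp] lemma T3_tmul (f g h : H →ₗ[k] H) (u v w : H) :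
    T3 k H f g h (u ⊗ₜ[k] (v ⊗ₜ[k] w)) = f u * (g v * h w) := by
  simp [T3]

theorem antipode_mul_rev (x y : H) : S' (x * y) = S' y * S' x := by
  let r := ℛ k x
  let s := ℛ k y
  let r1 : ∀ i, Coalgebra.Repr k (r.left i) (H × H) := fun i => ℛ k (r.left i)
  let r2 : ∀ i, Coalgebra.Repr k (r.right i) (H × H) := fun i => ℛ k (r.right i)
  let s1 : ∀ j, Coalgebra.Repr k (s.left j) (H × H) := fun j => ℛ k (s.left j)
  let s2 : ∀ j, Coalgebra.Repr k (s.right j) (H × H) := fun j => ℛ k (s.right j)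
  have Tx := Coalgebra.sum_tmul_tmul_eq r r1 r2
  have Ty := Coalgebra.sum_tmul_tmul_eq s s1 s2
  have keyx : ∀ c₁ c₂ : H,
      ∑ i ∈ r.index, ∑ m ∈ (r1 i).index,
        S' ((r1 i).left m * c₁) * ((r1 i).right m * (c₂ * S' (r.right i))) =
      ∑ i ∈ r.index, ∑ m ∈ (r2 i).index,
        S' (r.left i * c₁) * ((r2 i).left m * (c₂ * S' ((r2 i).right m))) := by
    intro c₁ c₂
    have h := congrArg
      (T3 k H (S' ∘ₗ LinearMap.mulRight k c₁) (LinearMap.mulRight k c₂) S') Tx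
    simpa [map_sum, mul_assoc] using h
  have keyy : ∀ d₁ d₂ d₃ : H,
      ∑ j ∈ s.index, ∑ n ∈ (s1 j).index,
        S' (d₁ * (s1 j).left n) * (d₂ * (((s1 j).right n * S' (s.right j)) * d₃)) =
      ∑ j ∈ s.index, ∑ n ∈ (s2 j).index,
        S' (d₁ * s.left j) * (d₂ * (((s2 j).left n * S' ((s2 j).right n)) * d₃)) := by
    intro d₁ d₂ d₃
    have h := congrArg
      (T3 k H (S' ∘ₗ LinearMap.mulLeft k d₁) (LinearMap.mulLeft k d₂)
        (LinearMap.mulRight k d₃ ∘ₗ S')) Ty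
    simpa [map_sum, mul_assoc] using h
  have step1 :
      (∑ j ∈ s.index, ∑ n ∈ (s1 j).index, ∑ i ∈ r.index, ∑ m ∈ (r1 i).index,
        S' ((r1 i).left m * (s1 j).left n) *
          ((r1 i).right m * (((s1 j).right n * S' (s.right j)) * S' (r.right i)))) =
      ∑ j ∈ s.index, ∑ n ∈ (s1 j).index, ∑ i ∈ r.index, ∑ m ∈ (r2 i).index,
        S' (r.left i * (s1 j).left n) *
          ((r2 i).left m * (((s1 j).right n * S' (s.right j)) * S' ((r2 i).right m))) :=
    Finset.sum_congr rfl fun j _ => Finset.sum_congr rfl fun n _ => keyx _ _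
  have step2 :
      (∑ i ∈ r.index, ∑ m ∈ (r2 i).index, ∑ j ∈ s.index, ∑ n ∈ (s1 j).index,
        S' (r.left i * (s1 j).left n) *
          ((r2 i).left m * (((s1 j).right n * S' (s.right j)) * S' ((r2 i).right m)))) =
      ∑ i ∈ r.index, ∑ m ∈ (r2 i).index, ∑ j ∈ s.index, ∑ n ∈ (s2 j).index,
        S' (r.left i * s.left j) *
          ((r2 i).left m * (((s2 j).left n * S' ((s2 j).right n)) * S' ((r2 i).right m))) :=
    Finset.sum_congr rfl fun i _ => Finset.sum_congr rfl fun m _ => keyy _ _ _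
  have collapse1 : ∀ j ∈ s.index, ∀ i ∈ r.index,
      (∑ n ∈ (s1 j).index, ∑ m ∈ (r1 i).index,
        S' ((r1 i).left m * (s1 j).left n) *
          ((r1 i).right m * (((s1 j).right n * S' (s.right j)) * S' (r.right i)))) =
      (counit (R := k) (s.left j) * counit (R := k) (r.left i)) •
        (S' (s.right j) * S' (r.right i)) := by
    intro j _ i _
    have hrepr := HopfAlgebra.sum_antipode_mul_eq_algebraMap_counit (R := k) (mulRepr k H (r1 i) (s1 j))
    simp only [mulRepr] at hrepr
    calc (∑ n ∈ (s1 j).index, ∑ m ∈ (r1 i).index,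
            S' ((r1 i).left m * (s1 j).left n) *
              ((r1 i).right m * (((s1 j).right n * S' (s.right j)) * S' (r.right i))))
        = ∑ m ∈ (r1 i).index, ∑ n ∈ (s1 j).index,
            (S' ((r1 i).left m * (s1 j).left n) * ((r1 i).right m * (s1 j).right n)) *
              (S' (s.right j) * S' (r.right i)) := by
          rw [Finset.sum_comm]
          refine Finset.sum_congr rfl fun m _ => Finset.sum_congr rfl fun n _ => ?_
          simp only [mul_assoc]
      _ = (∑ p ∈ (r1 i).index ×ˢ (s1 j).index,
            S' ((r1 i).left p.1 * (s1 j).left p.2) * ((r1 i).right p.1 * (s1 j).right p.2)) *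
              (S' (s.right j) * S' (r.right i)) := by
          rw [Finset.sum_mul, Finset.sum_product]
      _ = algebraMap k H (counit (R := k) (r.left i * s.left j)) *
            (S' (s.right j) * S' (r.right i)) := by rw [hrepr]
      _ = (counit (R := k) (s.left j) * counit (R := k) (r.left i)) •
            (S' (s.right j) * S' (r.right i)) := by
          rw [Bialgebra.counit_mul, mul_comm, ← Algebra.smul_def]
  have collapse3 : ∀ i ∈ r.index, ∀ j ∈ s.index,
      (∑ m ∈ (r2 i).index, ∑ n ∈ (s2 j).index,
        S' (r.left i * s.left j) *
          ((r2 i).left m * (((s2 j).left n * S' ((s2 j).right n)) * S' ((r2 i).right m)))) =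
      (counit (R := k) (r.right i) * counit (R := k) (s.right j)) •
        S' (r.left i * s.left j) := by
    intro i _ j _
    have hs := HopfAlgebra.sum_mul_antipode_eq_smul (R := k) (s2 j)
    have hr := HopfAlgebra.sum_mul_antipode_eq_smul (R := k) (r2 i)
    calc (∑ m ∈ (r2 i).index, ∑ n ∈ (s2 j).index,
            S' (r.left i * s.left j) *
              ((r2 i).left m * (((s2 j).left n * S' ((s2 j).right n)) * S' ((r2 i).right m)))) =
        ∑ m ∈ (r2 i).index,
            S' (r.left i * s.left j) *
              ((r2 i).left m *
                (((counit (R := k) (s.right j) • (1 : H))) * S' ((r2 i).right m))) := by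
          refine Finset.sum_congr rfl fun m _ => ?_
          rw [← hs, Finset.sum_mul, Finset.mul_sum, Finset.mul_sum]
      _ = ∑ m ∈ (r2 i).index, counit (R := k) (s.right j) •
            (S' (r.left i * s.left j) * ((r2 i).left m * S' ((r2 i).right m))) := by
          refine Finset.sum_congr rfl fun m _ => ?_
          simp [smul_mul_assoc, mul_smul_comm, one_mul]
      _ = counit (R := k) (s.right j) •
            (S' (r.left i * s.left j) * ∑ m ∈ (r2 i).index,
              (r2 i).left m * S' ((r2 i).right m)) := by
          rw [← Finset.smul_sum, ← Finset.mul_sum]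
      _ = (counit (R := k) (r.right i) * counit (R := k) (s.right j)) •
            S' (r.left i * s.left j) := by
          rw [hr, mul_smul_comm, mul_one, smul_smul, mul_comm]
  have hE1' :
      (∑ j ∈ s.index, ∑ i ∈ r.index,
        (counit (R := k) (s.left j) * counit (R := k) (r.left i)) •
          (S' (s.right j) * S' (r.right i))) = S' y * S' x := by
    calc (∑ j ∈ s.index, ∑ i ∈ r.index,
            (counit (R := k) (s.left j) * counit (R := k) (r.left i)) •
              (S' (s.right j) * S' (r.right i)))
        = (∑ j ∈ s.index, counit (R := k) (s.left j) • S' (s.right j)) *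
            (∑ i ∈ r.index, counit (R := k) (r.left i) • S' (r.right i)) := by
          rw [Finset.sum_mul_sum]
          exact Finset.sum_congr rfl fun j _ => Finset.sum_congr rfl fun i _ =>
            (smul_mul_smul_comm _ _ _ _).symm
      _ = S' (∑ j ∈ s.index, counit (R := k) (s.left j) • s.right j) *
            S' (∑ i ∈ r.index, counit (R := k) (r.left i) • r.right i) := by
          simp [map_sum, map_smul]
      _ = S' y * S' x := by rw [sum_counit_smul_right k H s, sum_counit_smul_right k H r]
  have hE3' : S' (x * y) =
      ∑ i ∈ r.index, ∑ j ∈ s.index,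
        (counit (R := k) (r.right i) * counit (R := k) (s.right j)) •
          S' (r.left i * s.left j) := by
    calc S' (x * y)
        = S' ((∑ i ∈ r.index, counit (R := k) (r.right i) • r.left i) *
            (∑ j ∈ s.index, counit (R := k) (s.right j) • s.left j)) := by
          rw [sum_counit_smul_left k H r, sum_counit_smul_left k H s]
      _ = ∑ i ∈ r.index, ∑ j ∈ s.index,
            (counit (R := k) (r.right i) * counit (R := k) (s.right j)) •
              S' (r.left i * s.left j) := by
          rw [Finset.sum_mul_sum, map_sum]
          refine Finset.sum_congr rfl fun i _ => ?_
          rw [map_sum]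
          refine Finset.sum_congr rfl fun j _ => ?_
          rw [smul_mul_smul_comm, map_smul]
  calc S' (x * y)
      = ∑ i ∈ r.index, ∑ j ∈ s.index,
          (counit (R := k) (r.right i) * counit (R := k) (s.right j)) •
            S' (r.left i * s.left j) := hE3'
    _ = ∑ i ∈ r.index, ∑ j ∈ s.index, ∑ m ∈ (r2 i).index, ∑ n ∈ (s2 j).index,
          S' (r.left i * s.left j) *
            ((r2 i).left m * (((s2 j).left n * S' ((s2 j).right n)) * S' ((r2 i).right m))) :=
        (Finset.sum_congr rfl fun i hi => Finset.sum_congr rfl fun j hj =>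
          collapse3 i hi j hj).symm
    _ = ∑ i ∈ r.index, ∑ m ∈ (r2 i).index, ∑ j ∈ s.index, ∑ n ∈ (s2 j).index,
          S' (r.left i * s.left j) *
            ((r2 i).left m * (((s2 j).left n * S' ((s2 j).right n)) * S' ((r2 i).right m))) :=
        Finset.sum_congr rfl fun i _ => Finset.sum_comm
    _ = ∑ i ∈ r.index, ∑ m ∈ (r2 i).index, ∑ j ∈ s.index, ∑ n ∈ (s1 j).index,
          S' (r.left i * (s1 j).left n) *
            ((r2 i).left m * (((s1 j).right n * S' (s.right j)) * S' ((r2 i).right m))) :=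
        step2.symm
    _ = ∑ j ∈ s.index, ∑ n ∈ (s1 j).index, ∑ i ∈ r.index, ∑ m ∈ (r2 i).index,
          S' (r.left i * (s1 j).left n) *
            ((r2 i).left m * (((s1 j).right n * S' (s.right j)) * S' ((r2 i).right m))) :=
        sum4_comm _ _ _ _ _
    _ = ∑ j ∈ s.index, ∑ n ∈ (s1 j).index, ∑ i ∈ r.index, ∑ m ∈ (r1 i).index,
          S' ((r1 i).left m * (s1 j).left n) *
            ((r1 i).right m * (((s1 j).right n * S' (s.right j)) * S' (r.right i))) :=
        step1.symm
    _ = ∑ j ∈ s.index, ∑ i ∈ r.index, ∑ n ∈ (s1 j).index, ∑ m ∈ (r1 i).index,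
          S' ((r1 i).left m * (s1 j).left n) *
            ((r1 i).right m * (((s1 j).right n * S' (s.right j)) * S' (r.right i))) :=
        Finset.sum_congr rfl fun j _ => Finset.sum_comm
    _ = ∑ j ∈ s.index, ∑ i ∈ r.index,
          (counit (R := k) (s.left j) * counit (R := k) (r.left i)) •
            (S' (s.right j) * S' (r.right i)) :=
        Finset.sum_congr rfl fun j hj => Finset.sum_congr rfl fun i hi => collapse1 j hj i hi
    _ = S' y * S' x := hE1'


/-- `Φ : H ⊗ H → H ⊗ H`, `x ⊗ y ↦ x₁ ⊗ x₂ y`. -/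
def galoisPhi : (H ⊗[k] H) →ₗ[k] (H ⊗[k] H) :=
  LinearMap.lTensor H (LinearMap.mul' k H) ∘ₗ
    (TensorProduct.assoc k H H H).toLinearMap ∘ₗ
    LinearMap.rTensor H (comul (R := k))

/-- `Ψ : H ⊗ H → H ⊗ H`, `x ⊗ y ↦ x₁ ⊗ S(x₂) y`. -/
def galoisPsi : (H ⊗[k] H) →ₗ[k] (H ⊗[k] H) :=
  LinearMap.lTensor H (LinearMap.mul' k H) ∘ₗ
    (TensorProduct.assoc k H H H).toLinearMap ∘ₗ
    LinearMap.rTensor H (LinearMap.lTensor H S' ∘ₗ comul (R := k))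

lemma galoisPhi_tmul (x y : H) {ι' : Type*} (r : Coalgebra.Repr k x ι') :
    galoisPhi k H (x ⊗ₜ[k] y) = ∑ i ∈ r.index, r.left i ⊗ₜ[k] (r.right i * y) := by
  simp only [galoisPhi, LinearMap.comp_apply, LinearEquiv.coe_coe, LinearMap.rTensor_tmul]
  rw [← r.eq]
  simp [sum_tmul, map_sum]

lemma galoisPsi_tmul (x y : H) {ι' : Type*} (r : Coalgebra.Repr k x ι') :
    galoisPsi k H (x ⊗ₜ[k] y) = ∑ i ∈ r.index, r.left i ⊗ₜ[k] (S' (r.right i) * y) := by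
  simp only [galoisPsi, LinearMap.comp_apply, LinearEquiv.coe_coe, LinearMap.rTensor_tmul]
  rw [← r.eq]
  simp [map_sum, sum_tmul]

lemma galoisPsi_galoisPhi (v : H ⊗[k] H) : galoisPsi k H (galoisPhi k H v) = v := by
  induction v using TensorProduct.induction_on with
  | zero => simp
  | add a b ha hb => rw [map_add, map_add, ha, hb]
  | tmul x y =>
    let r := ℛ k x
    let r1 : ∀ i, Coalgebra.Repr k (r.left i) (H × H) := fun i => ℛ k (r.left i)
    let r2 : ∀ i, Coalgebra.Repr k (r.right i) (H × H) := fun i => ℛ k (r.right i)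
    have key := congrArg (LinearMap.lTensor H
      ((LinearMap.mulRight k y) ∘ₗ LinearMap.mul' k H ∘ₗ LinearMap.rTensor H S'))
      (Coalgebra.sum_tmul_tmul_eq r r1 r2)
    simp only [map_sum, LinearMap.lTensor_tmul, LinearMap.comp_apply, LinearMap.rTensor_tmul,
      LinearMap.mul'_apply, LinearMap.mulRight_apply] at key
    rw [galoisPhi_tmul k H x y r, map_sum]
    calc ∑ i ∈ r.index, galoisPsi k H (r.left i ⊗ₜ (r.right i * y))
        = ∑ i ∈ r.index, ∑ m ∈ (r1 i).index,
            (r1 i).left m ⊗ₜ[k] (S' ((r1 i).right m) * r.right i * y) := by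
          refine Finset.sum_congr rfl fun i _ => ?_
          rw [galoisPsi_tmul k H _ _ (r1 i)]
          exact Finset.sum_congr rfl fun m _ => by rw [mul_assoc]
      _ = ∑ i ∈ r.index, ∑ m ∈ (r2 i).index,
            r.left i ⊗ₜ[k] (S' ((r2 i).left m) * (r2 i).right m * y) := key
      _ = ∑ i ∈ r.index, r.left i ⊗ₜ[k] ((counit (R := k) (r.right i) • (1 : H)) * y) := by
          refine Finset.sum_congr rfl fun i _ => ?_
          rw [← tmul_sum, ← Finset.sum_mul, HopfAlgebra.sum_antipode_mul_eq_smul (r2 i)]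
      _ = ∑ i ∈ r.index, (counit (R := k) (r.right i) • r.left i) ⊗ₜ[k] y := by
          refine Finset.sum_congr rfl fun i _ => ?_
          rw [smul_mul_assoc, one_mul, tmul_smul, smul_tmul']
      _ = x ⊗ₜ[k] y := by rw [← sum_tmul, sum_counit_smul_left k H r]

lemma galoisPhi_galoisPsi (v : H ⊗[k] H) : galoisPhi k H (galoisPsi k H v) = v := by
  induction v using TensorProduct.induction_on with
  | zero => simp
  | add a b ha hb => rw [map_add, map_add, ha, hb]
  | tmul x y =>
    let r := ℛ k x
    let r1 : ∀ i, Coalgebra.Repr k (r.left i) (H × H) := fun i => ℛ k (r.left i)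
    let r2 : ∀ i, Coalgebra.Repr k (r.right i) (H × H) := fun i => ℛ k (r.right i)
    have key := congrArg (LinearMap.lTensor H
      ((LinearMap.mulRight k y) ∘ₗ LinearMap.mul' k H ∘ₗ LinearMap.lTensor H S'))
      (Coalgebra.sum_tmul_tmul_eq r r1 r2)
    simp only [map_sum, LinearMap.lTensor_tmul, LinearMap.comp_apply,
      LinearMap.mul'_apply, LinearMap.mulRight_apply] at key
    rw [galoisPsi_tmul k H x y r, map_sum]
    calc ∑ i ∈ r.index, galoisPhi k H (r.left i ⊗ₜ (S' (r.right i) * y))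
        = ∑ i ∈ r.index, ∑ m ∈ (r1 i).index,
            (r1 i).left m ⊗ₜ[k] ((r1 i).right m * S' (r.right i) * y) := by
          refine Finset.sum_congr rfl fun i _ => ?_
          rw [galoisPhi_tmul k H _ _ (r1 i)]
          exact Finset.sum_congr rfl fun m _ => by rw [mul_assoc]
      _ = ∑ i ∈ r.index, ∑ m ∈ (r2 i).index,
            r.left i ⊗ₜ[k] ((r2 i).left m * S' ((r2 i).right m) * y) := key
      _ = ∑ i ∈ r.index, r.left i ⊗ₜ[k] ((counit (R := k) (r.right i) • (1 : H)) * y) := by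
          refine Finset.sum_congr rfl fun i _ => ?_
          rw [← tmul_sum, ← Finset.sum_mul, HopfAlgebra.sum_mul_antipode_eq_smul (r2 i)]
      _ = ∑ i ∈ r.index, (counit (R := k) (r.right i) • r.left i) ⊗ₜ[k] y := by
          refine Finset.sum_congr rfl fun i _ => ?_
          rw [smul_mul_assoc, one_mul, tmul_smul, smul_tmul']
      _ = x ⊗ₜ[k] y := by rw [← sum_tmul, sum_counit_smul_left k H r]

lemma galoisPhi_bijective : Function.Bijective (galoisPhi k H) :=
  Function.bijective_iff_has_inverse.2
    ⟨galoisPsi k H, galoisPsi_galoisPhi k H, galoisPhi_galoisPsi k H⟩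

lemma rproj_mul_iota (g : H) (b : A) :
    rproj k H A ι (g * ι b) = counit (R := k) (ι b) • rproj k H A ι g := by
  have hmem : g * ι b - counit (R := k) (ι b) • g ∈ HAplus k H A ι := by
    apply Submodule.subset_span
    refine ⟨g, b - algebraMap k A (counit (R := k) (ι b)), ?_, ?_⟩
    · rw [map_sub, map_sub, AlgHom.commutes, Bialgebra.counit_algebraMap, sub_self]
    · rw [map_sub, mul_sub, AlgHom.commutes, ← Algebra.commutes, ← Algebra.smul_def]
  have h0 : rproj k H A ι (g * ι b - counit (R := k) (ι b) • g) = 0 := by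
    exact (Submodule.Quotient.mk_eq_zero _).2 hmem
  rw [map_sub, map_smul, sub_eq_zero] at h0
  exact h0

theorem galois_map_descends_to_bijection
    (hι : IsRightCoidealSubalgebra k H A ι) :
    ∃ hle : tensorARel k H A ι ≤ LinearMap.ker (galoisBeta k H A ι),
      Function.Bijective (Submodule.liftQ (tensorARel k H A ι) (galoisBeta k H A ι) hle) := by
  classical
  have hβ : galoisBeta k H A ι =
      TensorProduct.map (rproj k H A ι) LinearMap.id ∘ₗ galoisPhi k H := rfl
  have iotaRepr : ∀ a : A, ∃ S : Finset (A × H),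
      (∑ p ∈ S, ι p.1 ⊗ₜ[k] p.2) = CoalgebraStruct.comul (R := k) (ι a) := by
    intro a
    obtain ⟨t, ht⟩ := hι.2 a
    obtain ⟨S, hS⟩ := TensorProduct.exists_finset (R := k) t
    exact ⟨S, by rw [← ht, hS, map_sum]; simp⟩
  have hle : tensorARel k H A ι ≤ LinearMap.ker (galoisBeta k H A ι) := by
    rw [tensorARel, Submodule.span_le]
    rintro z ⟨g, h', a, rfl⟩
    rw [SetLike.mem_coe, LinearMap.mem_ker, map_sub, sub_eq_zero, hβ,
      LinearMap.comp_apply, LinearMap.comp_apply]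
    obtain ⟨S, hS⟩ := iotaRepr a
    set ra : Coalgebra.Repr k (ι a) (A × H) := ⟨S, fun p => ι p.1, fun p => p.2, hS⟩ with hra
    set r := ℛ k g with hr
    rw [galoisPhi_tmul k H _ _ (mulRepr k H r ra), galoisPhi_tmul k H _ _ r,
      map_sum, map_sum]
    simp only [mulRepr, map_tmul, LinearMap.id_coe, id_eq]
    rw [Finset.sum_product]
    refine Finset.sum_congr rfl fun i _ => ?_
    calc (∑ q ∈ S, rproj k H A ι (r.left i * ι q.1) ⊗ₜ[k] (r.right i * q.2 * h'))
        = ∑ q ∈ S, rproj k H A ι (r.left i) ⊗ₜ[k]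
            (r.right i * (counit (R := k) (ι q.1) • q.2) * h') := by
          refine Finset.sum_congr rfl fun q _ => ?_
          rw [rproj_mul_iota, smul_tmul]
          congr 1
          rw [mul_smul_comm, smul_mul_assoc]
      _ = rproj k H A ι (r.left i) ⊗ₜ[k]
            (r.right i * (∑ q ∈ S, counit (R := k) (ι q.1) • q.2) * h') := by
          rw [← tmul_sum]
          congr 1
          rw [Finset.mul_sum, Finset.sum_mul]
      _ = rproj k H A ι (r.left i) ⊗ₜ[k] (r.right i * (ι a * h')) := by
          rw [show (∑ q ∈ S, counit (R := k) (ι q.1) • q.2) = ι a from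
            sum_counit_smul_right k H ra, mul_assoc]
  have hPsiMem : ∀ (y : H) (w : H), w ∈ HAplus k H A ι →
      galoisPsi k H (w ⊗ₜ[k] y) ∈ tensorARel k H A ι := by
    intro y w hw
    induction hw using Submodule.span_induction with
    | mem z hz =>
      obtain ⟨g, a, ha0, rfl⟩ := hz
      obtain ⟨S, hS⟩ := iotaRepr a
      set ra : Coalgebra.Repr k (ι a) (A × H) := ⟨S, fun p => ι p.1, fun p => p.2, hS⟩ with hra
      set r := ℛ k g with hr
      have h0 : ∀ C : H, (∑ q ∈ S, ι q.1 *
          (HopfAlgebra.antipode (R := k) q.2 * C)) = 0 := by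
        intro C
        have h1 := HopfAlgebra.sum_mul_antipode_eq_algebraMap_counit (R := k) ra
        calc (∑ q ∈ S, ι q.1 * (HopfAlgebra.antipode (R := k) q.2 * C))
            = (∑ q ∈ S, ι q.1 * HopfAlgebra.antipode (R := k) q.2) * C := by
              rw [Finset.sum_mul]
              exact Finset.sum_congr rfl fun q _ => (mul_assoc _ _ _).symm
          _ = 0 := by rw [h1, ha0, map_zero, zero_mul]
      have heq : galoisPsi k H ((g * ι a) ⊗ₜ[k] y) =
          ∑ p ∈ r.index ×ˢ S,
            ((r.left p.1 * ι p.2.1) ⊗ₜ[k]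
              (HopfAlgebra.antipode (R := k) p.2.2 *
                (HopfAlgebra.antipode (R := k) (r.right p.1) * y)) -
            r.left p.1 ⊗ₜ[k] (ι p.2.1 *
              (HopfAlgebra.antipode (R := k) p.2.2 *
                (HopfAlgebra.antipode (R := k) (r.right p.1) * y)))) := by
        have hz : (∑ p ∈ r.index ×ˢ S, r.left p.1 ⊗ₜ[k] (ι p.2.1 *
            (HopfAlgebra.antipode (R := k) p.2.2 *
              (HopfAlgebra.antipode (R := k) (r.right p.1) * y)))) = 0 := by
          rw [Finset.sum_product]
          refine Finset.sum_eq_zero fun i _ => ?_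
          show (∑ q ∈ S, r.left i ⊗ₜ[k] (ι q.1 *
            (HopfAlgebra.antipode (R := k) q.2 *
              (HopfAlgebra.antipode (R := k) (r.right i) * y)))) = 0
          rw [← tmul_sum, h0, tmul_zero]
        rw [Finset.sum_sub_distrib, hz, sub_zero]
        rw [galoisPsi_tmul k H _ _ (mulRepr k H r ra)]
        refine Finset.sum_congr rfl fun p _ => ?_
        simp only [mulRepr]
        rw [antipode_mul_rev, mul_assoc]
      rw [heq]
      refine Submodule.sum_mem _ fun p _ => Submodule.subset_span ?_
      exact ⟨r.left p.1, HopfAlgebra.antipode (R := k) p.2.2 *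
        (HopfAlgebra.antipode (R := k) (r.right p.1) * y), p.2.1, rfl⟩
    | zero => rw [zero_tmul, map_zero]; exact Submodule.zero_mem _
    | add u v _ _ hu hv => rw [add_tmul, map_add]; exact Submodule.add_mem _ hu hv
    | smul c u _ hu => rw [← smul_tmul', map_smul]; exact Submodule.smul_mem _ _ hu
  have hker : LinearMap.ker (galoisBeta k H A ι) ≤ tensorARel k H A ι := by
    intro v hv
    rw [LinearMap.mem_ker] at hv
    have h2 : LinearMap.rTensor H (HAplus k H A ι).mkQ (galoisPhi k H v) = 0 := hv
    have hPhi : galoisPhi k H v ∈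
        LinearMap.range (LinearMap.rTensor H (HAplus k H A ι).subtype) := by
      rw [← rTensor_mkQ (R := k) H (HAplus k H A ι)]
      exact h2
    have hAll : ∀ t : (HAplus k H A ι) ⊗[k] H,
        galoisPsi k H (LinearMap.rTensor H (HAplus k H A ι).subtype t) ∈
        tensorARel k H A ι := by
      intro t
      induction t using TensorProduct.induction_on with
      | zero => rw [map_zero, map_zero]; exact Submodule.zero_mem _
      | add a b ha hb => rw [map_add, map_add]; exact Submodule.add_mem _ ha hb
      | tmul p yy =>
        rw [LinearMap.rTensor_tmul]
        exact hPsiMem yy (p : H) p.2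
    obtain ⟨t, htv⟩ := hPhi
    have hmem := hAll t
    rw [htv, galoisPsi_galoisPhi] at hmem
    exact hmem
  refine ⟨hle, ?_, ?_⟩
  · rw [← LinearMap.ker_eq_bot]
    exact Submodule.ker_liftQ_eq_bot _ _ _ hker
  · rw [← LinearMap.range_eq_top, Submodule.range_liftQ, LinearMap.range_eq_top, hβ,
      LinearMap.coe_comp]
    exact (LinearMap.rTensor_surjective H
      (Submodule.mkQ_surjective (HAplus k H A ι))).comp
      (galoisPhi_bijective k H).surjective

end
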